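/- For every c with 1/√2 < c < 1, the pair p(z) = 1, q(z) = √2 z is an extremal pair for F₁(c): both p and q lie in S¹ (that is, ‖p‖₂ = ‖q‖₂ = 1), and sup_{c ≤ |z| < 1} |p(z)/q(z)| = 1/(√2 c) = F₁(c). -/

import Mathlib

open MeasureTheory Metric Set
open scoped ENNReal NNReal

noncomputable def bnorm (f : ℂ → ℂ) : ℝ :=
  Real.sqrt ((1 / Real.pi) * ∫ z in ball (0 : ℂ) 1, ‖f z‖ ^ 2)

def memA2 (f : ℂ → ℂ) : Prop :=
  DifferentiableOn ℂ f (ball (0 : ℂ) 1) ∧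
    IntegrableOn (fun z => ‖f z‖ ^ 2) (ball (0 : ℂ) 1)

def sphereA2 : Set (ℂ → ℂ) := {f | memA2 f ∧ bnorm f = 1}

noncomputable def ratioSup (c : ℝ) (f g : ℂ → ℂ) : ℝ≥0∞ :=
  ⨆ (z : ℂ) (_ : c ≤ ‖z‖ ∧ ‖z‖ < 1), (‖f z / g z‖₊ : ℝ≥0∞)

noncomputable def KF (c : ℝ) : ℝ≥0∞ :=
  ⨅ (f ∈ sphereA2) (g ∈ sphereA2), ratioSup c f g

noncomputable def KFn (n : ℕ) (c : ℝ) : ℝ≥0∞ :=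
  ⨅ (p ∈ {p : Polynomial ℂ | p.degree ≤ (n : ℕ) ∧ (fun z => p.eval z) ∈ sphereA2})
    (q ∈ {q : Polynomial ℂ | q.degree ≤ (n : ℕ) ∧ (fun z => q.eval z) ∈ sphereA2}),
      ratioSup c (fun z => p.eval z) (fun z => q.eval z)

def FGpair (c : ℝ) (f g : ℂ → ℂ) : Prop :=
  memA2 f ∧ memA2 g ∧ bnorm f ≤ 1 ∧ bnorm g ≤ 1 ∧
    ∀ z : ℂ, c ≤ ‖z‖ → ‖z‖ < 1 → ‖f z‖ ≤ ‖g z‖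

noncomputable def KFB (c : ℝ) : ℝ :=
  sSup {x : ℝ | ∃ f g : ℂ → ℂ, FGpair c f g ∧ x = bnorm f ^ 2 - bnorm g ^ 2}

set_option maxHeartbeats 1000000

section Aux

lemma int_one' : ∫ _z in ball (0 : ℂ) 1, (1:ℝ) = Real.pi := by
  rw [setIntegral_const, measureReal_def, Complex.volume_ball]
  simp [ENNReal.toReal_mul]

lemma int_normsq' : ∫ z in ball (0 : ℂ) 1, ‖z‖^2 = Real.pi / 2 := by
  have h := MeasureTheory.integral_fun_norm_addHaar (volume : Measure ℂ)
    (fun y : ℝ => Set.indicator (Set.Iio (1:ℝ)) (fun y => y^2) y)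
  rw [Complex.finrank_real_complex] at h
  have h1 : ∫ x : ℂ, Set.indicator (Set.Iio (1:ℝ)) (fun y => y^2) ‖x‖
      = ∫ z in ball (0 : ℂ) 1, ‖z‖^2 := by
    rw [← integral_indicator measurableSet_ball]
    congr 1
    ext x
    by_cases hx : x ∈ ball (0:ℂ) 1
    · rw [Set.indicator_of_mem hx, Set.indicator_of_mem (by simpa [mem_ball_zero_iff] using hx)]
    · rw [Set.indicator_of_notMem hx,
        Set.indicator_of_notMem (by simpa [mem_ball_zero_iff] using hx)]
  have h2 : ∫ y in Ioi (0:ℝ), y ^ (2-1) • Set.indicator (Set.Iio (1:ℝ)) (fun y => y^2) y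
      = (1:ℝ)/4 := by
    have hpt : ∀ y : ℝ, y ^ (2-1 : ℕ) • Set.indicator (Set.Iio (1:ℝ)) (fun y => y^2) y
        = Set.indicator (Set.Iio (1:ℝ)) (fun y => y^3) y := by
      intro y
      by_cases hy : y ∈ Set.Iio (1:ℝ)
      · rw [Set.indicator_of_mem hy, Set.indicator_of_mem hy]; ring_nf
      · rw [Set.indicator_of_notMem hy, Set.indicator_of_notMem hy]; simp
    simp_rw [hpt]
    rw [setIntegral_indicator measurableSet_Iio]
    have hio : Set.Ioi (0:ℝ) ∩ Set.Iio 1 = Set.Ioo 0 1 := by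
      ext y; simp [Set.mem_Ioo, and_comm]
    rw [hio, ← integral_Ioc_eq_integral_Ioo,
      ← intervalIntegral.integral_of_le (by norm_num : (0:ℝ) ≤ 1)]
    rw [integral_pow]
    norm_num
  rw [h1, h2, measureReal_def, Complex.volume_ball] at h
  rw [h]
  simp [ENNReal.toReal_mul]
  ring

lemma integrable_sq_poly (f : ℂ → ℂ) (hf : Continuous f) :
    IntegrableOn (fun z => ‖f z‖ ^ 2) (ball (0:ℂ) 1) := by
  have : Continuous (fun z : ℂ => ‖f z‖^2) := by continuity
  exact (this.locallyIntegrable.integrableOn_isCompact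
    (isCompact_closedBall (0:ℂ) 1)).mono_set ball_subset_closedBall

lemma int_neg' (f : ℂ → ℝ) : ∫ z in ball (0:ℂ) 1, f (-z) = ∫ z in ball (0:ℂ) 1, f z := by
  have hmp : MeasurePreserving (fun z : ℂ => -z) volume volume :=
    Measure.measurePreserving_neg _
  have hemb : MeasurableEmbedding (fun z : ℂ => -z) :=
    (Homeomorph.neg ℂ).measurableEmbedding
  have := hmp.setIntegral_preimage_emb hemb f (ball (0:ℂ) 1)
  rw [← this]
  congr 1
  ext z
  simp [mem_ball_zero_iff]

lemma int_affine (a b : ℂ) :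
    ∫ z in ball (0:ℂ) 1, ‖a + b*z‖^2 = Real.pi * (‖a‖^2 + ‖b‖^2/2) := by
  have hcont : Continuous (fun z : ℂ => a + b * z) := by continuity
  have hint := integrable_sq_poly _ hcont
  have hcont' : Continuous (fun z : ℂ => a + b * (-z)) := by continuity
  have hint' : IntegrableOn (fun z => ‖a + b * (-z)‖ ^ 2) (ball (0:ℂ) 1) :=
    integrable_sq_poly _ hcont'
  have hneg : ∫ z in ball (0:ℂ) 1, ‖a + b*(-z)‖^2 = ∫ z in ball (0:ℂ) 1, ‖a + b*z‖^2 :=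
    int_neg' (fun z => ‖a + b*z‖^2)
  have hpar : ∀ z : ℂ, ‖a + b*z‖^2 + ‖a + b*(-z)‖^2 = 2*‖a‖^2 + 2*‖b‖^2*‖z‖^2 := by
    intro z
    have hplaw := parallelogram_law_with_norm ℝ a (b*z)
    have h2 : a + b*(-z) = a - b*z := by ring
    rw [h2]
    calc ‖a + b*z‖^2 + ‖a - b*z‖^2 = 2*(‖a‖^2 + ‖b*z‖^2) := by
          simpa [sq] using hplaw
      _ = 2*‖a‖^2 + 2*‖b‖^2*‖z‖^2 := by rw [norm_mul]; ring
  have hsum : ∫ z in ball (0:ℂ) 1, (‖a + b*z‖^2 + ‖a + b*(-z)‖^2)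
      = 2*‖a‖^2 * Real.pi + 2*‖b‖^2*(Real.pi/2) := by
    simp_rw [hpar]
    have hz2 : IntegrableOn (fun z : ℂ => ‖z‖^2) (ball (0:ℂ) 1) :=
      integrable_sq_poly (fun z => z) continuous_id
    have hconst : IntegrableOn (fun _ : ℂ => 2*‖a‖^2) (ball (0:ℂ) 1) :=
      integrableOn_const measure_ball_lt_top.ne
    rw [integral_add hconst (hz2.const_mul _)]
    rw [MeasureTheory.integral_const_mul (2*‖b‖^2) (fun z : ℂ => ‖z‖^2)]
    have h1 := int_one'
    rw [setIntegral_const, smul_eq_mul, mul_one] at h1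
    rw [setIntegral_const, smul_eq_mul, int_normsq', h1]
    ring
  rw [integral_add hint hint', hneg] at hsum
  linarith

lemma bnorm_affine (a b : ℂ) : bnorm (fun z => a + b*z) = Real.sqrt (‖a‖^2 + ‖b‖^2/2) := by
  unfold bnorm
  rw [int_affine, one_div, inv_mul_cancel_left₀ Real.pi_ne_zero]

lemma mem_affine (a b : ℂ) (h : ‖a‖^2 + ‖b‖^2/2 = 1) : (fun z => a + b*z) ∈ sphereA2 := by
  refine ⟨⟨?_, integrable_sq_poly _ (by continuity)⟩, ?_⟩
  · exact ((differentiable_const a).add ((differentiable_id.const_mul b))).differentiableOn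
  · rw [bnorm_affine, h, Real.sqrt_one]

lemma sphere_iff (a b : ℂ) (h : bnorm (fun z => a + b*z) = 1) : ‖a‖^2 + ‖b‖^2/2 = 1 := by
  rw [bnorm_affine] at h
  have h0 : (0:ℝ) ≤ ‖a‖^2 + ‖b‖^2/2 := by positivity
  nlinarith [Real.sq_sqrt h0, h]

lemma circle_int (a b : ℂ) (r : ℝ) (hr : 0 ≤ r) :
    ∫ θ in (0:ℝ)..(2*Real.pi), ‖a + b*(r*Complex.exp (θ*Complex.I))‖^2
      = 2*Real.pi*(‖a‖^2 + ‖b‖^2*r^2) := by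
  set f : ℝ → ℝ := fun θ => ‖a + b*(r*Complex.exp (θ*Complex.I))‖^2 with hf
  have hcont : Continuous f := by
    apply Continuous.pow
    apply Continuous.norm
    continuity
  have hper : Function.Periodic f (2*Real.pi) := by
    intro θ
    simp only [hf]
    congr 3
    push_cast
    rw [add_mul, Complex.exp_add]
    simp [Complex.exp_two_pi_mul_I]
  have hshift : ∫ θ in (0:ℝ)..(2*Real.pi), f (θ + Real.pi)
      = ∫ θ in (0:ℝ)..(2*Real.pi), f θ := by
    rw [intervalIntegral.integral_comp_add_right f Real.pi]
    have := hper.intervalIntegral_add_eq Real.pi 0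
    rw [show (2*Real.pi+Real.pi) = Real.pi + 2*Real.pi by ring]
    simpa using this
  have hval : ∀ θ : ℝ, f θ + f (θ + Real.pi) = 2*‖a‖^2 + 2*‖b‖^2*r^2 := by
    intro θ
    have hexp : Complex.exp ((↑(θ + Real.pi))*Complex.I) = - Complex.exp (θ*Complex.I) := by
      push_cast
      rw [add_mul, Complex.exp_add, Complex.exp_pi_mul_I]
      ring
    have hpar := parallelogram_law_with_norm ℝ a (b*(r*Complex.exp (θ*Complex.I)))
    have h2 : f (θ + Real.pi) = ‖a - b*(r*Complex.exp (θ*Complex.I))‖^2 := by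
      simp only [hf, hexp]
      rw [show a + b*((r:ℂ)*(-Complex.exp (θ*Complex.I)))
        = a - b*((r:ℂ)*Complex.exp (θ*Complex.I)) by ring]
    have h3 : ‖b*((r:ℂ)*Complex.exp (θ*Complex.I))‖^2 = ‖b‖^2*r^2 := by
      rw [norm_mul, norm_mul, Complex.norm_exp_ofReal_mul_I, mul_one, Complex.norm_real,
        Real.norm_of_nonneg hr, mul_pow]
    rw [h2]; simp only [hf]
    nlinarith [hpar, h3]
  have hsum : ∫ θ in (0:ℝ)..(2*Real.pi), (f θ + f (θ + Real.pi))
      = 2*Real.pi*(2*‖a‖^2 + 2*‖b‖^2*r^2) := by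
    simp_rw [hval]
    rw [intervalIntegral.integral_const, smul_eq_mul]
    ring
  have hi1 : IntervalIntegrable f volume 0 (2*Real.pi) := hcont.intervalIntegrable _ _
  have hi2 : IntervalIntegrable (fun θ => f (θ + Real.pi)) volume 0 (2*Real.pi) :=
    (hcont.comp (by continuity)).intervalIntegrable _ _
  rw [intervalIntegral.integral_add hi1 hi2, hshift] at hsum
  have hgoal : ∫ θ in (0:ℝ)..(2*Real.pi), f θ = 2*Real.pi*(‖a‖^2 + ‖b‖^2*r^2) := by linarith
  exact hgoal

lemma zeros_countable (a b : ℂ) (r : ℝ) (hrne : r ≠ 0) (h : a ≠ 0 ∨ b ≠ 0) :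
    Set.Countable {θ : ℝ | a + b*((r:ℂ)*Complex.exp (θ*Complex.I)) = 0} := by
  set E := {θ : ℝ | a + b*((r:ℂ)*Complex.exp (θ*Complex.I)) = 0} with hE
  rcases Set.eq_empty_or_nonempty E with he | ⟨θ₀, hθ₀⟩
  · rw [he]; exact Set.countable_empty
  · apply Set.Countable.mono (s₁ := E) ?_
      (Set.countable_range (fun n : ℤ => θ₀ + n*(2*Real.pi)))
    intro θ hθ
    have h1 : b*((r:ℂ)*Complex.exp (θ*Complex.I)) = b*((r:ℂ)*Complex.exp (θ₀*Complex.I)) := by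
      have e1 : a + b*((r:ℂ)*Complex.exp (θ*Complex.I)) = 0 := hθ
      have e2 : a + b*((r:ℂ)*Complex.exp (θ₀*Complex.I)) = 0 := hθ₀
      linear_combination e1 - e2
    have hb : b ≠ 0 := by
      rcases h with ha | hb
      · intro hb0
        apply ha
        have := hθ₀
        rw [hE] at this
        simpa [hb0] using this
      · exact hb
    have h2 : (r:ℂ)*Complex.exp (θ*Complex.I) = (r:ℂ)*Complex.exp (θ₀*Complex.I) :=
      mul_left_cancel₀ hb h1
    have hr : (r:ℂ) ≠ 0 := by exact_mod_cast hrne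
    have h3 : Complex.exp (θ*Complex.I) = Complex.exp (θ₀*Complex.I) := mul_left_cancel₀ hr h2
    obtain ⟨n, hn⟩ := Complex.exp_eq_exp_iff_exists_int.1 h3
    refine ⟨n, ?_⟩
    have h4 : (θ:ℂ) = (θ₀:ℂ) + n*(2*Real.pi) := by
      have hI : (Complex.I:ℂ) ≠ 0 := Complex.I_ne_zero
      have h5 : (θ:ℂ)*Complex.I = ((θ₀:ℂ) + n*(2*Real.pi))*Complex.I := by
        rw [hn]; push_cast; ring
      exact mul_right_cancel₀ hI h5
    have h6 : ((θ₀ + n*(2*Real.pi) : ℝ) : ℂ) = (θ:ℂ) := by rw [h4]; push_cast; ring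
    exact_mod_cast h6

lemma key_lower (c : ℝ) (hc : 1/Real.sqrt 2 < c) (hc1 : c < 1) (a b a' b' : ℂ)
    (hp : ‖a‖^2 + ‖b‖^2/2 = 1) (hq : ‖a'‖^2 + ‖b'‖^2/2 = 1) :
    ENNReal.ofReal (1/(Real.sqrt 2 * c))
      ≤ ratioSup c (fun z => a + b*z) (fun z => a' + b'*z) := by
  have hs2 : (0:ℝ) < Real.sqrt 2 := Real.sqrt_pos.2 (by norm_num)
  have hc0 : 0 < c := lt_trans (by positivity) hc
  have hsc : 1 < Real.sqrt 2 * c := by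
    rw [div_lt_iff₀ hs2] at hc
    nlinarith
  have h2c : 1 < 2*c^2 := by
    nlinarith [Real.sq_sqrt (by norm_num : (0:ℝ) ≤ 2)]
  set S := ratioSup c (fun z => a + b*z) (fun z => a' + b'*z) with hS
  by_cases htop : S = ⊤
  · rw [htop]; exact le_top
  set M := S.toReal with hM
  have hM0 : 0 ≤ M := ENNReal.toReal_nonneg
  have hle : ∀ θ : ℝ, a' + b'*((c:ℂ)*Complex.exp (θ*Complex.I)) ≠ 0 →
      ‖a + b*((c:ℂ)*Complex.exp (θ*Complex.I))‖
        ≤ M * ‖a' + b'*((c:ℂ)*Complex.exp (θ*Complex.I))‖ := by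
    intro θ hq0
    set z := (c:ℂ)*Complex.exp (θ*Complex.I) with hz
    have hnz : ‖z‖ = c := by
      rw [hz, norm_mul, Complex.norm_exp_ofReal_mul_I, mul_one, Complex.norm_real,
        Real.norm_of_nonneg hc0.le]
    have hmem : c ≤ ‖z‖ ∧ ‖z‖ < 1 := ⟨le_of_eq hnz.symm, by rw [hnz]; exact hc1⟩
    have hsup : (‖(a + b*z) / (a' + b'*z)‖₊ : ℝ≥0∞) ≤ S := by
      rw [hS]
      exact le_iSup₂
        (f := fun (z : ℂ) (_ : c ≤ ‖z‖ ∧ ‖z‖ < 1) => (‖(a + b*z)/(a' + b'*z)‖₊ : ℝ≥0∞)) z hmem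
    have hreal : ‖(a + b*z) / (a' + b'*z)‖ ≤ M := by
      have := ENNReal.toReal_mono htop hsup
      simpa using this
    rw [norm_div] at hreal
    rw [div_le_iff₀ (norm_pos_iff.2 hq0)] at hreal
    linarith
  have hqne : a' ≠ 0 ∨ b' ≠ 0 := by
    by_contra h
    push_neg at h
    rw [h.1, h.2] at hq
    simp at hq
  have hE0 : volume {θ : ℝ | a' + b'*((c:ℂ)*Complex.exp (θ*Complex.I)) = 0} = 0 :=
    (zeros_countable a' b' c hc0.ne' hqne).measure_zero volume
  have hcontp : Continuous (fun θ : ℝ => ‖a + b*((c:ℂ)*Complex.exp (θ*Complex.I))‖^2) := by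
    apply Continuous.pow; apply Continuous.norm; continuity
  have hcontq : Continuous
      (fun θ : ℝ => M^2 * ‖a' + b'*((c:ℂ)*Complex.exp (θ*Complex.I))‖^2) := by
    apply Continuous.mul continuous_const
    apply Continuous.pow; apply Continuous.norm; continuity
  have hae : (fun θ : ℝ => ‖a + b*((c:ℂ)*Complex.exp (θ*Complex.I))‖^2)
      ≤ᵐ[volume] (fun θ : ℝ => M^2 * ‖a' + b'*((c:ℂ)*Complex.exp (θ*Complex.I))‖^2) := by
    refine ae_iff.2 (measure_mono_null ?_ hE0)
    intro θ hθ
    simp only [Set.mem_setOf_eq, not_le] at hθ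
    by_contra hq0
    have h1 := hle θ hq0
    have h2 : ‖a + b*((c:ℂ)*Complex.exp (θ*Complex.I))‖^2
        ≤ (M * ‖a' + b'*((c:ℂ)*Complex.exp (θ*Complex.I))‖)^2 := by
      apply pow_le_pow_left₀ (norm_nonneg _) h1
    nlinarith [norm_nonneg (a + b*((c:ℂ)*Complex.exp (θ*Complex.I))),
      norm_nonneg (a' + b'*((c:ℂ)*Complex.exp (θ*Complex.I)))]
  have hint : ∫ θ in (0:ℝ)..(2*Real.pi), ‖a + b*((c:ℂ)*Complex.exp (θ*Complex.I))‖^2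
      ≤ ∫ θ in (0:ℝ)..(2*Real.pi), M^2 * ‖a' + b'*((c:ℂ)*Complex.exp (θ*Complex.I))‖^2 :=
    intervalIntegral.integral_mono_ae (by positivity) (hcontp.intervalIntegrable _ _)
      (hcontq.intervalIntegrable _ _) hae
  rw [circle_int a b c hc0.le, intervalIntegral.integral_const_mul,
    circle_int a' b' c hc0.le] at hint
  have hx1 : ‖a‖^2 ≤ 1 := by nlinarith [sq_nonneg ‖b‖]
  have hA : 1 ≤ ‖a‖^2 + ‖b‖^2*c^2 := by nlinarith
  have hB : ‖a'‖^2 + ‖b'‖^2*c^2 ≤ 2*c^2 := by nlinarith [sq_nonneg ‖a'‖]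
  have hMc : 1 ≤ M * (Real.sqrt 2 * c) := by
    have hs2sq : Real.sqrt 2 ^ 2 = 2 := Real.sq_sqrt (by norm_num)
    have e1 : M^2*(2*Real.pi*(‖a'‖^2 + ‖b'‖^2*c^2)) ≤ M^2*(2*Real.pi*(2*c^2)) := by
      nlinarith [mul_nonneg (mul_nonneg (sq_nonneg M) (by positivity : (0:ℝ) ≤ 2*Real.pi))
        (by linarith : (0:ℝ) ≤ 2*c^2 - (‖a'‖^2+‖b'‖^2*c^2))]
    have h1 : 1 ≤ M^2 * (2*c^2) := by nlinarith [Real.pi_pos]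
    have hsq : (M*(Real.sqrt 2*c))^2 = M^2*(2*c^2) := by
      rw [mul_pow, mul_pow, hs2sq]
    nlinarith [sq_nonneg (M*(Real.sqrt 2*c) - 1), hsq, h1,
      mul_nonneg hM0 (mul_pos hs2 hc0).le]
  have hfin : 1/(Real.sqrt 2 * c) ≤ M := by
    rw [div_le_iff₀ (by positivity)]
    linarith
  calc ENNReal.ofReal (1/(Real.sqrt 2 * c)) ≤ ENNReal.ofReal M := ENNReal.ofReal_le_ofReal hfin
    _ = S := ENNReal.ofReal_toReal htop

lemma sup_pair (c : ℝ) (hc0 : 0 < c) (hc1 : c < 1) :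
    ratioSup c (fun _ : ℂ => (1 : ℂ)) (fun z : ℂ => (Real.sqrt 2 : ℂ) * z)
      = ENNReal.ofReal (1 / (Real.sqrt 2 * c)) := by
  have hs2 : (0:ℝ) < Real.sqrt 2 := Real.sqrt_pos.2 (by norm_num)
  apply le_antisymm
  · apply iSup₂_le
    intro z hz
    have hz0 : (0:ℝ) < ‖z‖ := lt_of_lt_of_le hc0 hz.1
    rw [← ENNReal.ofReal_coe_nnreal, coe_nnnorm]
    apply ENNReal.ofReal_le_ofReal
    rw [norm_div, norm_one, norm_mul, Complex.norm_real, Real.norm_of_nonneg hs2.le]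
    rw [div_le_div_iff₀ (by positivity) (by positivity)]
    nlinarith [hz.1]
  · have hmem : c ≤ ‖(c:ℂ)‖ ∧ ‖(c:ℂ)‖ < 1 := by
      rw [Complex.norm_real, Real.norm_of_nonneg hc0.le]
      exact ⟨le_refl c, hc1⟩
    have hval : (‖(1:ℂ) / ((Real.sqrt 2 : ℂ) * (c:ℂ))‖₊ : ℝ≥0∞)
        = ENNReal.ofReal (1 / (Real.sqrt 2 * c)) := by
      rw [← ENNReal.ofReal_coe_nnreal, coe_nnnorm]
      congr 1
      rw [norm_div, norm_one, norm_mul, Complex.norm_real, Complex.norm_real,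
        Real.norm_of_nonneg hs2.le, Real.norm_of_nonneg hc0.le]
    calc ENNReal.ofReal (1 / (Real.sqrt 2 * c))
        = (‖(1:ℂ) / ((Real.sqrt 2 : ℂ) * (c:ℂ))‖₊ : ℝ≥0∞) := hval.symm
      _ ≤ _ := le_iSup₂
          (f := fun (z : ℂ) (_ : c ≤ ‖z‖ ∧ ‖z‖ < 1) =>
            (‖(1:ℂ)/((Real.sqrt 2 : ℂ)*z)‖₊ : ℝ≥0∞)) (c:ℂ) hmem

end Aux

/-- For `1/√2 < c < 1`, the pair `p(z) = 1`, `q(z) = √2 z` is an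
extremal pair for `F₁(c)`, with value `1/(√2 c)`. -/
theorem stmt17 (c : ℝ) (hc : 1 / Real.sqrt 2 < c) (hc1 : c < 1) :
    (fun _ : ℂ => (1 : ℂ)) ∈ sphereA2 ∧
    (fun z : ℂ => (Real.sqrt 2 : ℂ) * z) ∈ sphereA2 ∧
    ratioSup c (fun _ : ℂ => (1 : ℂ)) (fun z : ℂ => (Real.sqrt 2 : ℂ) * z) =
      ENNReal.ofReal (1 / (Real.sqrt 2 * c)) ∧
    ratioSup c (fun _ : ℂ => (1 : ℂ)) (fun z : ℂ => (Real.sqrt 2 : ℂ) * z) = KFn 1 c := by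
  have hs2 : (0:ℝ) < Real.sqrt 2 := Real.sqrt_pos.2 (by norm_num)
  have hs2sq : Real.sqrt 2 ^ 2 = 2 := Real.sq_sqrt (by norm_num)
  have hc0 : 0 < c := lt_trans (by positivity) hc
  have heq1 : (fun z : ℂ => (1:ℂ) + 0*z) = (fun _ : ℂ => (1:ℂ)) := by funext z; ring
  have heq2 : (fun z : ℂ => (0:ℂ) + (Real.sqrt 2 : ℂ)*z)
      = (fun z : ℂ => (Real.sqrt 2 : ℂ) * z) := by funext z; ring
  have hmem1 : (fun _ : ℂ => (1 : ℂ)) ∈ sphereA2 := by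
    rw [← heq1]
    exact mem_affine 1 0 (by simp)
  have hn2 : ‖((Real.sqrt 2 : ℝ) : ℂ)‖ = Real.sqrt 2 := by
    rw [Complex.norm_real, Real.norm_of_nonneg hs2.le]
  have hmem2 : (fun z : ℂ => (Real.sqrt 2 : ℂ) * z) ∈ sphereA2 := by
    rw [← heq2]
    apply mem_affine 0 (Real.sqrt 2 : ℂ)
    rw [hn2, hs2sq]
    norm_num
  have hsup := sup_pair c hc0 hc1
  refine ⟨hmem1, hmem2, hsup, ?_⟩
  apply le_antisymm
  · -- ratioSup ≤ KFn : every admissible pair has ratioSup ≥ 1/(√2 c)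
    rw [hsup]
    apply le_iInf₂
    intro p hp
    apply le_iInf₂
    intro q hq
    obtain ⟨hpd, hps⟩ := hp
    obtain ⟨hqd, hqs⟩ := hq
    have hpd1 : p.degree ≤ 1 := by exact_mod_cast hpd
    have hqd1 : q.degree ≤ 1 := by exact_mod_cast hqd
    have hrep : ∀ (r : Polynomial ℂ), r.degree ≤ 1 →
        (fun z : ℂ => r.eval z) = (fun z : ℂ => r.coeff 0 + r.coeff 1 * z) := by
      intro r hr
      funext z
      conv_lhs => rw [Polynomial.eq_X_add_C_of_degree_le_one hr]
      simp [add_comm]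
    rw [hrep p hpd1, hrep q hqd1]
    rw [hrep p hpd1] at hps
    rw [hrep q hqd1] at hqs
    exact key_lower c hc hc1 _ _ _ _ (sphere_iff _ _ hps.2) (sphere_iff _ _ hqs.2)
  · -- KFn ≤ ratioSup : take p = C 1, q = C √2 * X
    have hp1 : ((Polynomial.C (1:ℂ)).degree ≤ ((1:ℕ) : WithBot ℕ) ∧
        (fun z => (Polynomial.C (1:ℂ)).eval z) ∈ sphereA2) := by
      constructor
      · exact le_trans Polynomial.degree_C_le (by norm_num)
      · simpa using hmem1
    have hs2ne : ((Real.sqrt 2 : ℝ) : ℂ) ≠ 0 := by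
      simp only [ne_eq, Complex.ofReal_eq_zero]
      exact hs2.ne'
    have hq1 : ((Polynomial.C ((Real.sqrt 2 : ℝ) : ℂ) * Polynomial.X).degree ≤ ((1:ℕ) : WithBot ℕ) ∧
        (fun z => (Polynomial.C ((Real.sqrt 2 : ℝ) : ℂ) * Polynomial.X).eval z) ∈ sphereA2) := by
      constructor
      · rw [Polynomial.degree_C_mul_X hs2ne]
        norm_num
      · simpa using hmem2
    calc KFn 1 c ≤ ratioSup c (fun z => (Polynomial.C (1:ℂ)).eval z)
          (fun z => (Polynomial.C ((Real.sqrt 2 : ℝ) : ℂ) * Polynomial.X).eval z) := by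
          unfold KFn
          exact iInf_le_of_le (Polynomial.C (1:ℂ)) (iInf_le_of_le hp1
            (iInf_le_of_le (Polynomial.C ((Real.sqrt 2 : ℝ) : ℂ) * Polynomial.X)
              (iInf_le_of_le hq1 le_rfl)))
      _ = ratioSup c (fun _ : ℂ => (1 : ℂ)) (fun z : ℂ => (Real.sqrt 2 : ℂ) * z) := by
          congr 1 <;> funext z <;> simp
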